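/- Let g be a Lorentzian metric of block form g = -dt² + h_{ij}(t,x) dx^i dx^j with h Riemannian, and let ĝ = g + (x^n)^k H + O((x^n)^{k+1}) near a boundary point, where H is a symmetric tensor with H(v_0,v_0) > 0 for a fixed lightlike vector v_0. Then for x in the interior (x^n > 0) sufficiently close to the boundary point and v sufficiently close to v_0 with g(v,v) = 0, one has ĝ(v,v) > 0; consequently any curve lightlike for ĝ with velocities near v_0 in that region is timelike for g. -/
import Mathlib


open scoped BigOperators

/-- Quadratic form of a matrix. -/
def quadForm {m : ℕ} (A : Matrix (Fin m) (Fin m) ℝ) (v : Fin m → ℝ) : ℝ :=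
  ∑ i, ∑ j, A i j * v i * v j

lemma quadForm_sub {m : ℕ} (A B : Matrix (Fin m) (Fin m) ℝ) (v : Fin m → ℝ) :
    quadForm A v - quadForm B v = ∑ i, ∑ j, (A i j - B i j) * v i * v j := by
  simp [quadForm, ← Finset.sum_sub_distrib, sub_mul]

lemma quadForm_abs_le {m : ℕ} (A : Matrix (Fin m) (Fin m) ℝ) (v : Fin m → ℝ)
    (a b : ℝ) (hA : ∀ i j, |A i j| ≤ a) (hv : ∀ i, |v i| ≤ b) (hb : 0 ≤ b) :
    |∑ i, ∑ j, A i j * v i * v j| ≤ (m : ℝ)^2 * a * b^2 := by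
  calc |∑ i, ∑ j, A i j * v i * v j| ≤ ∑ i, ∑ j, |A i j * v i * v j| := by
        refine (Finset.abs_sum_le_sum_abs _ _).trans ?_
        exact Finset.sum_le_sum fun i _ => Finset.abs_sum_le_sum_abs _ _
    _ ≤ ∑ _i : Fin m, ∑ _j : Fin m, a * b * b := by
        refine Finset.sum_le_sum fun i _ => Finset.sum_le_sum fun j _ => ?_
        rw [abs_mul, abs_mul]
        have h1 : |A i j| ≤ a := hA i j
        have h2 : |v i| ≤ b := hv i
        have h3 : |v j| ≤ b := hv j
        have ha : 0 ≤ a := le_trans (abs_nonneg _) h1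
        exact mul_le_mul (mul_le_mul h1 h2 (abs_nonneg _) ha) h3 (abs_nonneg _)
          (by positivity)
    _ = (m : ℝ)^2 * a * b^2 := by
        simp [Finset.sum_const, Finset.card_fin]
        ring

/-- If `g' = g + (xⁿ)^k H + O((xⁿ)^{k+1})` with `H(v₀,v₀) > 0` at a boundary point
`p₀` where `v₀` is `g`-lightlike, then in the interior (`xⁿ > 0`) near `p₀` and for
`v` near `v₀`: `(g'-g)(v,v) > 0`; hence `g`-lightlike `v` satisfy `g'(v,v) > 0`, and
`g'`-lightlike `v` are `g`-timelike. -/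
theorem stmt16 {n : ℕ} (k : ℕ) (hk : 1 ≤ k) (δ₀ C₀ : ℝ) (hδ₀ : 0 < δ₀)
    (g g' H : (Fin (n+1) → ℝ) → Matrix (Fin (n+1)) (Fin (n+1)) ℝ)
    (hg_symm : ∀ x, (g x).IsSymm) (hg'_symm : ∀ x, (g' x).IsSymm)
    (hH_symm : ∀ x, (H x).IsSymm)
    (hg_cont : ∀ i j, Continuous (fun x => g x i j))
    (hg'_cont : ∀ i j, Continuous (fun x => g' x i j))
    (hH_cont : ∀ i j, Continuous (fun x => H x i j))
    -- the block form g = -dt² + h(t,x) dx dx with h Riemannian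
    (hg00 : ∀ x, g x 0 0 = -1)
    (hg0j : ∀ x j, j ≠ 0 → g x 0 j = 0 ∧ g x j 0 = 0)
    (hg_riem : ∀ x v, v 0 = 0 → v ≠ 0 → 0 < quadForm (g x) v)
    -- H depends only on the tangential variables
    (hH_tan : ∀ x t, H (Function.update x (Fin.last n) t) = H x)
    (p₀ v₀ : Fin (n+1) → ℝ) (hp₀ : p₀ (Fin.last n) = 0)
    (hv₀null : quadForm (g p₀) v₀ = 0)
    (hHpos : 0 < quadForm (H p₀) v₀)
    (hrem : ∀ x ∈ Metric.ball p₀ δ₀, ∀ i j,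
      |g' x i j - g x i j - (x (Fin.last n))^k * H x i j|
        ≤ C₀ * |x (Fin.last n)|^(k+1)) :
    ∃ δ > (0:ℝ), ∀ x ∈ Metric.ball p₀ δ, 0 < x (Fin.last n) →
      ∀ v ∈ Metric.ball v₀ δ,
        (0 < quadForm (g' x) v - quadForm (g x) v) ∧
        (quadForm (g x) v = 0 → 0 < quadForm (g' x) v) ∧
        (quadForm (g' x) v = 0 → quadForm (g x) v < 0) := by
  classical
  set c : ℝ := quadForm (H p₀) v₀ / 2 with hc
  have hcpos : 0 < c := by positivity
  -- continuity of (x, v) ↦ quadForm (H x) v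
  set f : ((Fin (n+1) → ℝ) × (Fin (n+1) → ℝ)) → ℝ :=
    fun p => quadForm (H p.1) p.2 with hf
  have hfcont : Continuous f := by
    rw [hf]
    unfold quadForm
    refine continuous_finset_sum _ fun i _ => continuous_finset_sum _ fun j _ => ?_
    exact (((hH_cont i j).comp continuous_fst).mul
      ((continuous_apply i).comp continuous_snd)).mul
      ((continuous_apply j).comp continuous_snd)
  have hopen : IsOpen {p | c < f p} := isOpen_lt continuous_const hfcont
  have hmem : (p₀, v₀) ∈ {p | c < f p} := by
    simp only [Set.mem_setOf_eq, hf]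
    rw [hc]; linarith
  obtain ⟨ε, hεpos, hεball⟩ := Metric.isOpen_iff.mp hopen _ hmem
  set B : ℝ := 1 + ‖v₀‖ with hB
  have hBpos : (0:ℝ) < B := by positivity
  set C : ℝ := max C₀ 0 with hC
  have hCnn : 0 ≤ C := le_max_right _ _
  set D : ℝ := ((n+1 : ℕ) : ℝ)^2 * C * B^2 with hD
  have hDnn : 0 ≤ D := by positivity
  set δ : ℝ := min (min ε δ₀) (min 1 (c / (D + 1))) with hδ
  have hδpos : 0 < δ := by
    refine lt_min (lt_min hεpos hδ₀) (lt_min one_pos ?_)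
    positivity
  have hδε : δ ≤ ε := (min_le_left _ _).trans (min_le_left _ _)
  have hδδ₀ : δ ≤ δ₀ := (min_le_left _ _).trans (min_le_right _ _)
  have hδ1 : δ ≤ 1 := (min_le_right _ _).trans (min_le_left _ _)
  have hδc : δ ≤ c / (D + 1) := (min_le_right _ _).trans (min_le_right _ _)
  clear_value c f B C D δ
  refine ⟨δ, hδpos, fun x hx hxn v hv => ?_⟩
  set t : ℝ := x (Fin.last n) with ht
  clear_value t
  -- basic distance facts
  have hxε : dist x p₀ < ε := lt_of_lt_of_le (Metric.mem_ball.mp hx) hδε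
  have hxδ₀ : x ∈ Metric.ball p₀ δ₀ := Metric.mem_ball.mpr
    (lt_of_lt_of_le (Metric.mem_ball.mp hx) hδδ₀)
  have hvε : dist v v₀ < ε := lt_of_lt_of_le (Metric.mem_ball.mp hv) hδε
  have hv1 : dist v v₀ < 1 := lt_of_lt_of_le (Metric.mem_ball.mp hv) hδ1
  have htlt : t < δ := by
    have h1 : dist (x (Fin.last n)) (p₀ (Fin.last n)) ≤ dist x p₀ := dist_le_pi_dist x p₀ _
    rw [hp₀, Real.dist_eq, sub_zero, ← ht] at h1
    calc t ≤ |t| := le_abs_self t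
      _ ≤ dist x p₀ := h1
      _ < δ := Metric.mem_ball.mp hx
  have htc : t < c / (D + 1) := htlt.trans_le hδc
  -- quadForm (H x) v > c
  have hfxv : c < quadForm (H x) v := by
    have : (x, v) ∈ Metric.ball (p₀, v₀) ε := by
      rw [Metric.mem_ball, Prod.dist_eq]
      exact max_lt hxε hvε
    have h := hεball this
    simp only [Set.mem_setOf_eq, hf] at h
    exact h
  -- bound on |v i|
  have hvB : ∀ i, |v i| ≤ B := by
    intro i
    have h1 : dist (v i) (v₀ i) ≤ dist v v₀ := dist_le_pi_dist v v₀ i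
    have h2 : |v₀ i| ≤ ‖v₀‖ := by
      have := norm_le_pi_norm v₀ i
      simpa using this
    calc |v i| ≤ |v i - v₀ i| + |v₀ i| := by
          have := abs_sub_abs_le_abs_sub (v i) (v₀ i); linarith [abs_abs (v i)]
      _ ≤ dist v v₀ + ‖v₀‖ := by
          rw [Real.dist_eq] at h1; linarith
      _ ≤ B := by rw [hB]; linarith
  -- remainder bound
  have hR : |∑ i, ∑ j, (g' x i j - g x i j - t^k * H x i j) * v i * v j|
      ≤ D * t^(k+1) := by
    have hb := quadForm_abs_le (fun i j => g' x i j - g x i j - t^k * H x i j) v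
      (C * t^(k+1)) B (fun i j => ?_) hvB hBpos.le
    · calc _ ≤ ((n+1 : ℕ) : ℝ)^2 * (C * t^(k+1)) * B^2 := hb
        _ = D * t^(k+1) := by rw [hD]; ring
    · have := hrem x hxδ₀ i j
      rw [← ht] at this
      have habs : |t| = t := abs_of_pos hxn
      rw [habs] at this
      refine this.trans ?_
      have : 0 ≤ t^(k+1) := by positivity
      nlinarith [le_max_left C₀ (0:ℝ)]
  -- main estimate
  have hmain : 0 < quadForm (g' x) v - quadForm (g x) v := by
    rw [quadForm_sub]
    have hsplit : ∑ i, ∑ j, (g' x i j - g x i j) * v i * v j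
        = t^k * quadForm (H x) v
          + ∑ i, ∑ j, (g' x i j - g x i j - t^k * H x i j) * v i * v j := by
      rw [quadForm, Finset.mul_sum, ← Finset.sum_add_distrib]
      refine Finset.sum_congr rfl fun i _ => ?_
      rw [Finset.mul_sum, ← Finset.sum_add_distrib]
      refine Finset.sum_congr rfl fun j _ => ?_
      ring
    rw [hsplit]
    have htk : 0 < t^k := pow_pos hxn k
    have h1 : t^k * c < t^k * quadForm (H x) v :=
      (mul_lt_mul_iff_right₀ htk).mpr hfxv
    have h2 : -(D * t^(k+1)) ≤ ∑ i, ∑ j, (g' x i j - g x i j - t^k * H x i j) * v i * v j :=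
      neg_le_of_abs_le hR
    have h3 : D * t^(k+1) < c * t^k := by
      have h4 : t^(k+1) = t * t^k := by ring
      rw [h4]
      have h5 : D * t < c := by
        have h6 : t * (D + 1) < c :=
          (lt_div_iff₀ (by linarith : (0:ℝ) < D + 1)).mp htc
        have h7 : t * (D + 1) = D * t + t := by ring
        linarith
      calc D * (t * t^k) = (D * t) * t^k := by ring
        _ < c * t^k := mul_lt_mul_of_pos_right h5 htk
    linarith
  refine ⟨hmain, fun h0 => ?_, fun h0 => ?_⟩
  · linarith
  · linarith
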